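/- Let A be a finite alphabet, let x ∈ A^ℤ be aperiodic, and let 0 ≤ t < t' < p be integers such that (p,t) is a strong rank-2 cut of x. Then (p,t') is a strong rank-2 cut of x if and only if [t, t') ⊆ Per_p(x) or [t', t+p) ⊆ Per_p(x). -/

import Mathlib

namespace ToeplitzFR

open Set

variable {A B C : Type*}

/-- The shift map `S` on `ℤ → A`: `S(x)(i) = x(i+1)`. -/
def shift (x : ℤ → A) : ℤ → A := fun i => x (i + 1)

/-- The inverse shift map `S⁻¹`. -/
def shiftInv (x : ℤ → A) : ℤ → A := fun i => x (i - 1)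

/-- The shift by `k`: `S^k`. -/
def shiftBy (k : ℤ) (x : ℤ → A) : ℤ → A := fun i => x (i + k)

/-- The finite word `x[i, i+n)`. -/
def factorAt (x : ℤ → A) (i : ℤ) (n : ℕ) : List A :=
  (List.range n).map fun j => x (i + j)

/-- `x` is a periodic point of the shift. -/
def IsPeriodicPoint (x : ℤ → A) : Prop := ∃ p : ℕ, 0 < p ∧ ∀ i : ℤ, x (i + p) = x i

def IsAperiodicPoint (x : ℤ → A) : Prop := ¬ IsPeriodicPoint x

/-- `Per_p(x)`. -/
def PerSet (x : ℤ → A) (p : ℕ) : Set ℤ := {i : ℤ | ∀ k : ℤ, x (i + k * p) = x i}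

/-- `Per(x) = ⋃_{p>1} Per_p(x)`. -/
def PerAll (x : ℤ → A) : Set ℤ := {i : ℤ | ∃ p : ℕ, 1 < p ∧ i ∈ PerSet x p}

/-- `x` is a Toeplitz sequence. -/
def IsToeplitz (x : ℤ → A) : Prop := ∀ i : ℤ, ∃ p : ℕ, 1 < p ∧ i ∈ PerSet x p

/-- The shift orbit of `x`. -/
def orbit (x : ℤ → A) : Set (ℤ → A) := {y | ∃ k : ℤ, y = shiftBy k x}

/-- `X` is the Toeplitz subshift generated by the Toeplitz sequence `x`. -/
def ToeplitzGenerates [TopologicalSpace A] (x : ℤ → A) (X : Set (ℤ → A)) : Prop :=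
  IsToeplitz x ∧ X = closure (orbit x)

/-- `X` is a Toeplitz subshift. -/
def IsToeplitzSubshift [TopologicalSpace A] (X : Set (ℤ → A)) : Prop :=
  ∃ x : ℤ → A, ToeplitzGenerates x X

/-- The `p`-skeleton of `x`, with `none` as the blank symbol. -/
noncomputable def Skel (x : ℤ → A) (p : ℕ) : ℤ → Option A :=
  fun i => @ite _ (i ∈ PerSet x p) (Classical.dec _) (some (x i)) none

/-- `p` is an essential period of `x`. -/
def IsEssentialPeriod (x : ℤ → A) (p : ℕ) : Prop :=
  1 < p ∧ ∀ q : ℕ, 0 < q → q < p → ∃ i : ℤ, Skel x p (i + q) ≠ Skel x p i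

/-- `(P n)` is a period structure for `x`. -/
def IsPeriodStructure (x : ℤ → A) (P : ℕ → ℕ) : Prop :=
  StrictMono P ∧ (∀ n, IsEssentialPeriod x (P n)) ∧ (∀ n, P n ∣ P (n+1)) ∧
    ∀ i : ℤ, ∃ n, i ∈ PerSet x (P n)

/-- `q` divides the scale of the Toeplitz subshift `X`. -/
def DividesScale [TopologicalSpace A] (X : Set (ℤ → A)) (q : ℕ) : Prop :=
  ∃ (x : ℤ → A) (P : ℕ → ℕ),
    ToeplitzGenerates x X ∧ IsPeriodStructure x P ∧ ∃ n, q ∣ P n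

/-! ### Directive sequences and S-adic subshifts -/

/-- All morphisms in the directive sequence are non-erasing. -/
def NonErasing {A : ℕ → Type*} (τ : ∀ n, A (n+1) → List (A n)) : Prop :=
  ∀ n a, τ n a ≠ []

/-- The directive sequence has constant length. -/
def ConstantLength {A : ℕ → Type*} (τ : ∀ n, A (n+1) → List (A n)) : Prop :=
  ∀ n, ∀ a b : A (n+1), (τ n a).length = (τ n b).length

/-- The directive sequence is proper. -/
def ProperSeq {A : ℕ → Type*} (τ : ∀ n, A (n+1) → List (A n)) : Prop :=
  ∀ n, ∃ b c : A n, ∀ a : A (n+1), (τ n a).head? = some b ∧ (τ n a).getLast? = some c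

/-- `sadicWordAux τ n k a = τ_{[n, n+k)}(a)`. -/
def sadicWordAux {A : ℕ → Type*} (τ : ∀ n, A (n+1) → List (A n)) (n : ℕ) :
    ∀ k : ℕ, A (n + k) → List (A n)
  | 0, a => [a]
  | (k+1), a => (τ (n+k) a).flatMap (sadicWordAux τ n k)

/-- `word0 τ k a = τ_{[0, k)}(a)` for `a ∈ A k`. -/
def word0 {A : ℕ → Type*} (τ : ∀ n, A (n+1) → List (A n)) :
    ∀ k : ℕ, A k → List (A 0)
  | 0, a => [a]
  | (k+1), a => (τ k a).flatMap (word0 τ k)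

/-- The directive sequence is primitive. -/
def PrimitiveSeq {A : ℕ → Type*} (τ : ∀ n, A (n+1) → List (A n)) : Prop :=
  ∀ n, ∃ k : ℕ, 0 < k ∧ ∀ (a : A (n+k)) (b : A n), b ∈ sadicWordAux τ n k a

/-- The `n`-th level `X_τ^{(n)}` of the S-adic system generated by `τ`. -/
def XLevel {A : ℕ → Type*} (τ : ∀ n, A (n+1) → List (A n)) (n : ℕ) :
    Set (ℤ → A n) :=
  {y | ∀ (i : ℤ) (m : ℕ), ∃ k : ℕ, 0 < k ∧ ∃ a : A (n+k),
      (factorAt y i m).IsInfix (sadicWordAux τ n k a)}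

/-- The alphabet rank (`liminf_n |A_n|`) is at most `K`. -/
def AlphabetRankLE (A : ℕ → Type*) [∀ n, Fintype (A n)] (K : ℕ) : Prop :=
  ∀ N : ℕ, ∃ n, N ≤ n ∧ Fintype.card (A n) ≤ K

/-! ### Recognizability -/

/-- `z` is the bi-infinite concatenation `⋯σ(y(-1)).σ(y(0))σ(y(1))⋯`,
with `σ(y(0))` starting at coordinate `0`. -/
def IsConcat (σ : B → List C) (y : ℤ → B) (z : ℤ → C) : Prop :=
  ∃ c : ℤ → ℤ, c 0 = 0 ∧ (∀ j : ℤ, c (j + 1) = c j + (σ (y j)).length) ∧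
    ∀ (j : ℤ) (m : Fin (σ (y j)).length), z (c j + (m : ℕ)) = (σ (y j)).get m

/-- `(y, k)` is a centered `σ`-representation of `x` in `Y`. -/
def IsCenteredRep (σ : B → List C) (Y : Set (ℤ → B)) (x : ℤ → C)
    (y : ℤ → B) (k : ℕ) : Prop :=
  y ∈ Y ∧ k < (σ (y 0)).length ∧ IsConcat σ y (fun m => x (m - k))

/-- The morphism `σ` is recognizable in `Y`. -/
def RecognizableIn (σ : B → List C) (Y : Set (ℤ → B)) : Prop :=
  ∀ (x : ℤ → C) (y y' : ℤ → B) (k k' : ℕ),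
    IsCenteredRep σ Y x y k → IsCenteredRep σ Y x y' k' → y = y' ∧ k = k'

/-- The directive sequence `τ` is recognizable. -/
def RecognizableSeq {A : ℕ → Type*} (τ : ∀ n, A (n+1) → List (A n)) : Prop :=
  ∀ n, RecognizableIn (τ n) (XLevel τ (n+1))

/-! ### Conjugacy -/

/-- `(X, TX)` and `(Y, TY)` are conjugate via a homeomorphism. -/
def ConjugateBy [TopologicalSpace A] [TopologicalSpace B]
    (X : Set (ℤ → A)) (Y : Set (ℤ → B))
    (TX : (ℤ → A) → (ℤ → A)) (TY : (ℤ → B) → (ℤ → B)) : Prop :=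
  ∃ φ : ↥X ≃ₜ ↥Y, ∀ (x : ℤ → A) (hx : x ∈ X) (hx' : TX x ∈ X),
    (φ ⟨TX x, hx'⟩).1 = TY (φ ⟨x, hx⟩).1

/-- `(X, S)` and `(Y, S)` are conjugate subshifts. -/
def Conjugate [TopologicalSpace A] [TopologicalSpace B]
    (X : Set (ℤ → A)) (Y : Set (ℤ → B)) : Prop :=
  ConjugateBy X Y shift shift

/-- `X` is a strong Toeplitz subshift of rank `K`: it is conjugate to the S-adic subshift
of a constant-length, primitive, proper and recognizable directive sequence of
alphabet rank at most `K`. -/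
def IsStrongToeplitzOfRank [TopologicalSpace A] (X : Set (ℤ → A)) (K : ℕ) : Prop :=
  ∃ (B : ℕ → Type) (iB : ∀ n, Fintype (B n)) (σ : ∀ n, B (n+1) → List (B n)),
    NonErasing σ ∧ ConstantLength σ ∧ PrimitiveSeq σ ∧ ProperSeq σ ∧
    RecognizableSeq σ ∧ @AlphabetRankLE B iB K ∧
    @Conjugate A (B 0) _ ⊥ X (XLevel σ 0)

/-- `X` is conjugate to the S-adic subshift of a primitive, proper and recognizable
directive sequence of alphabet rank at most `K`. -/
def HasFiniteRankSAdicRep [TopologicalSpace A] (X : Set (ℤ → A)) (K : ℕ) : Prop :=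
  ∃ (B : ℕ → Type) (iB : ∀ n, Fintype (B n)) (σ : ∀ n, B (n+1) → List (B n)),
    NonErasing σ ∧ PrimitiveSeq σ ∧ ProperSeq σ ∧
    RecognizableSeq σ ∧ @AlphabetRankLE B iB K ∧
    @Conjugate A (B 0) _ ⊥ X (XLevel σ 0)

/-! ### Cuts, languages, built-from -/

/-- The set of words `{x[t+kp, t+(k+1)p) : k ∈ ℤ}`. -/
def cutWords (x : ℤ → A) (p t : ℕ) : Set (List A) :=
  {w | ∃ k : ℤ, w = factorAt x ((t : ℤ) + k * p) p}

/-- `(p, t)` is a strong rank-2 cut of `x`. -/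
def StrongRank2Cut (x : ℤ → A) (p t : ℕ) : Prop :=
  t < p ∧ ∃ u v : List A, u ≠ v ∧ cutWords x p t = {u, v}

/-- The language `L_n(X)`. -/
def Lang (n : ℕ) (X : Set (ℤ → A)) : Set (List A) :=
  {w | ∃ x ∈ X, ∃ i : ℤ, w = factorAt x i n}

/-- The maximal common prefix of `u` and `v` has length greater than `m`. -/
def CommonPrefixLongerThan (u v : List A) (m : ℕ) : Prop :=
  m + 1 ≤ u.length ∧ m + 1 ≤ v.length ∧ u.take (m+1) = v.take (m+1)

/-- The maximal common suffix of `u` and `v` has length greater than `m`. -/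
def CommonSuffixLongerThan (u v : List A) (m : ℕ) : Prop :=
  CommonPrefixLongerThan u.reverse v.reverse m

/-- `b = (β₀, (α₁, …, α_k), β₁)` is a building of the word `w` from `W`:
`w = β₀α₁⋯α_kβ₁`, all `αᵢ ∈ W`, `β₀` is a proper suffix of an element of `W`,
and `β₁` is a proper prefix of an element of `W`. -/
def IsBuilding (W : Set (List A)) (w : List A)
    (b : List A × List (List A) × List A) : Prop :=
  w = b.1 ++ b.2.1.flatten ++ b.2.2 ∧ (∀ α ∈ b.2.1, α ∈ W) ∧
  (∃ u ∈ W, b.1 <:+ u ∧ b.1 ≠ u) ∧ (∃ u ∈ W, b.2.2 <+: u ∧ b.2.2 ≠ u)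

/-- `w` is uniquely built from `W`. -/
def UniquelyBuiltFrom (W : Set (List A)) (w : List A) : Prop :=
  ∃! b : List A × List (List A) × List A, IsBuilding W w b

/-- `X` together with one of its points satisfies the strong rank-2 cut property. -/
def GoodCuts [TopologicalSpace A] (X : Set (ℤ → A)) (x : ℤ → A) : Prop :=
  ∀ p : ℕ, 0 < p → DividesScale X p → ∀ m : ℕ,
    ∃ q t : ℕ, StrongRank2Cut x q t ∧ p ∣ q ∧ DividesScale X q ∧
      ∃ u v : List A, u ≠ v ∧ cutWords x q t = {u, v} ∧
        CommonPrefixLongerThan u v m ∧ CommonSuffixLongerThan u v m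

/-! ### Euclidean pairs and buildings of bi-infinite sequences -/

/-- `{u, v}` is a Euclidean pair. -/
def EuclideanPair (u v : List A) : Prop :=
  ∃ (w : List A) (k l : ℕ),
    u = (List.replicate k w).flatten ∧ v = (List.replicate l w).flatten

/-- `α` is the distinguished prefix of `u` and `v`. -/
def IsDistinguishedPrefix (u v α : List A) : Prop :=
  α.length < u.length + v.length ∧
  ∀ x y : List A,
    (∃ l : List (List A), (∀ w ∈ l, w = u ∨ w = v) ∧ x = u ++ l.flatten) →
    (∃ l : List (List A), (∀ w ∈ l, w = u ∨ w = v) ∧ y = v ++ l.flatten) →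
    α.length + 1 ≤ x.length → α.length + 1 ≤ y.length →
    α <+: x ∧ α <+: y ∧ x[α.length]? ≠ y[α.length]?

/-- `β` is the distinguished suffix of `u` and `v`. -/
def IsDistinguishedSuffix (u v β : List A) : Prop :=
  IsDistinguishedPrefix u.reverse v.reverse β.reverse

/-- `(c, f)` is a building of the bi-infinite sequence `x` from `W`:
block `j` starts at position `c j` and carries the word `f j ∈ W`. -/
def IsBuildingSeq (W : Set (List A)) (x : ℤ → A) (c : ℤ → ℤ) (f : ℤ → List A) : Prop :=
  (∀ j : ℤ, f j ∈ W) ∧ (∀ j : ℤ, c (j + 1) = c j + (f j).length) ∧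
  ∀ (j : ℤ) (m : Fin (f j).length), x (c j + (m : ℕ)) = (f j).get m

/-- The subshift `X_{u,v}` of all sequences built from `{u, v}`. -/
def Xuv (u v : List A) : Set (ℤ → A) :=
  {x | ∃ (c : ℤ → ℤ) (f : ℤ → List A), IsBuildingSeq {u, v} x c f}

/-! ### Block-code conjugacies -/

/-- A conjugacy `φ : X → Y` admitting block width `2n+1`. -/
structure BlockConjugacy (A : Type*) (X Y : Set (ℤ → A)) (n : ℕ) where
  toFun : (ℤ → A) → (ℤ → A)
  invFun : (ℤ → A) → (ℤ → A)
  maps_to : ∀ x ∈ X, toFun x ∈ Y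
  maps_from : ∀ y ∈ Y, invFun y ∈ X
  left_inv : ∀ x ∈ X, invFun (toFun x) = x
  right_inv : ∀ y ∈ Y, toFun (invFun y) = y
  shift_comm : ∀ x ∈ X, toFun (shift x) = shift (toFun x)
  code : List A → A
  code_inv : List A → A
  code_spec : ∀ x ∈ X, ∀ i : ℤ, toFun x i = code (factorAt x (i - n) (2*n+1))
  code_inv_spec : ∀ y ∈ Y, ∀ i : ℤ, invFun y i = code_inv (factorAt y (i - n) (2*n+1))

/-! ### Parts, permutation action, χ -/

/-- `W` is a member of `Parts(X, p)`: a class of the common-`p`-skeleton relation. -/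
def SkelClass (X : Set (ℤ → A)) (p : ℕ) (W : Set (ℤ → A)) : Prop :=
  ∃ y ∈ X, W = {z ∈ X | Skel z p = Skel y p}

/-- The map `ψ̂` induced by a permutation `ψ` of `A^p`. -/
def permHat (p : ℕ) (ψ : Equiv.Perm (Fin p → A)) (x : ℤ → A) : ℤ → A :=
  fun i =>
    if h : (i.emod p).toNat < p then
      ψ (fun m : Fin p => x (i - i.emod p + (m : ℕ))) ⟨(i.emod p).toNat, h⟩
    else x i

/-- The relation `E_p` on compact subsets of `A^ℤ`. -/
def EpRel (p : ℕ) (K L : Set (ℤ → A)) : Prop :=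
  ∃ ψ : Equiv.Perm (Fin p → A), L = permHat p ψ '' K

/-- `W ∈ Parts_*(X, p)`. -/
def SkelClassStar (X : Set (ℤ → A)) (p : ℕ) (W : Set (ℤ → A)) : Prop :=
  SkelClass X p W ∧ ∀ y ∈ W, Skel y p (-1) = none ∧ Skel y p 0 ≠ none

/-- `length(W) = L` for `W ∈ Parts_*(X, p)`. -/
def HasLength (p : ℕ) (W : Set (ℤ → A)) (L : ℕ) : Prop :=
  ∀ y ∈ W, (∀ i : ℕ, i < L → Skel y p (i : ℤ) ≠ none) ∧ Skel y p (L : ℤ) = none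

/-- `Z ∈ χ(X, p)`. -/
def ChiMem (X : Set (ℤ → A)) (p : ℕ) (Z : Set (ℤ → A)) : Prop :=
  ∃ (W : Set (ℤ → A)) (L : ℕ), SkelClassStar X p W ∧ HasLength p W L ∧
    (∀ (W' : Set (ℤ → A)) (L' : ℕ),
      SkelClassStar X p W' → HasLength p W' L' → L' ≤ L) ∧
    Z = shiftBy ((L / 2 : ℕ) : ℤ) '' W

/-- `χ(X, p) E_p^fin χ(Y, p)`. -/
def ChiEpFin (X Y : Set (ℤ → A)) (p : ℕ) : Prop :=
  (∀ K, ChiMem X p K → ∃ L, ChiMem Y p L ∧ EpRel p K L) ∧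
  (∀ L, ChiMem Y p L → ∃ K, ChiMem X p K ∧ EpRel p K L)

/-! ### Single holes and fillings -/

/-- The Toeplitz sequence `x` has single holes with respect to the period structure `P`. -/
def SingleHoles (x : ℤ → A) (P : ℕ → ℕ) : Prop :=
  IsPeriodStructure x P ∧
  ∀ n, ∃! i : ℤ, 0 ≤ i ∧ i < (P n : ℤ) ∧ i ∉ PerSet x (P n)

/-- The Toeplitz subshift `X` has single holes. -/
def HasSingleHoles [TopologicalSpace A] (X : Set (ℤ → A)) : Prop :=
  ∃ (x : ℤ → A) (P : ℕ → ℕ), ToeplitzGenerates x X ∧ SingleHoles x P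

/-- `w` is the `(n, m)`-filling of `x` (for periods `pn < pm`). -/
def IsFilling (x : ℤ → A) (pn pm : ℕ) (w : List A) : Prop :=
  w.length = pm / pn - 1 ∧
  ∀ h : ℤ, 0 ≤ h → h < (pm : ℤ) → h ∉ PerSet x pm →
    ∀ (j : ℕ) (hj : j < w.length), w.get ⟨j, hj⟩ = x (h + (j+1) * pn)

/-- `u` is a `θ`-palindrome. -/
def ThetaPalindrome (θ : Equiv.Perm A) (u : List A) : Prop :=
  u.map (fun a => θ a) = u.reverse

/-! ### Nice symmetries -/

/-- `x` has nice symmetries with respect to `(p, q)`. -/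
def NiceSymmetries (x : ℤ → A) (p q : ℕ) : Prop :=
  ∃ m : ℤ, 1 < m ∧ m ≤ (q : ℤ) + 1 ∧
    (∀ k : ℕ, k < q / p →
      (Set.Ico ((k * p : ℕ) : ℤ) (((k+1) * p : ℕ) : ℤ) ⊆ PerSet x q ↔
       Set.Ico (m - ((k+1) * p : ℕ)) (m - (k * p : ℕ)) ⊆ PerSet x q)) ∧
    (∀ k k' : ℕ, k < q / p → k' < q / p →
      Set.Ico ((k * p : ℕ) : ℤ) (((k+1) * p : ℕ) : ℤ) ⊆ PerSet x q →
      Set.Ico ((k' * p : ℕ) : ℤ) (((k'+1) * p : ℕ) : ℤ) ⊆ PerSet x q →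
      (factorAt x ((k * p : ℕ) : ℤ) p = factorAt x ((k' * p : ℕ) : ℤ) p ↔
       factorAt x (m - ((k+1) * p : ℕ)) p = factorAt x (m - ((k'+1) * p : ℕ)) p))

/-- For some `p` dividing the scale of `X`, `x` has nice symmetries with respect to
`(p, q)` for all `q > p` with `p ∣ q` dividing the scale of `X`. -/
def NiceSymAll [TopologicalSpace A] (X : Set (ℤ → A)) (x : ℤ → A) : Prop :=
  ∃ p : ℕ, 0 < p ∧ DividesScale X p ∧
    ∀ q : ℕ, p < q → p ∣ q → DividesScale X q → NiceSymmetries x p q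

/-- A pair `(x, x')` is a centered left asymptotic pair. -/
def CenteredLeftAsymptoticPair (x x' : ℤ → A) : Prop :=
  (∀ i : ℤ, i < 0 → x i = x' i) ∧ x 0 ≠ x' 0

/-! ### Automorphism groups -/

/-- `e` is an automorphism of the subshift `(X, S)`. -/
def IsShiftAutomorphism [TopologicalSpace A] (X : Set (ℤ → A)) (e : ↥X ≃ₜ ↥X) : Prop :=
  ∀ (x : ℤ → A) (hx : x ∈ X) (hx' : shift x ∈ X),
    (e ⟨shift x, hx'⟩).1 = shift (e ⟨x, hx⟩).1

/-- The automorphism group of `(X, S)` is isomorphic, as a group, to `ℤ × ℤ/nℤ`. -/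
def AutGroupIsoZxZmod [TopologicalSpace A] (X : Set (ℤ → A)) (n : ℕ) : Prop :=
  ∃ Φ : {e : ↥X ≃ₜ ↥X // IsShiftAutomorphism X e} → ℤ × ZMod n,
    Function.Bijective Φ ∧
    ∀ e f g : {e : ↥X ≃ₜ ↥X // IsShiftAutomorphism X e},
      (∀ z : ↥X, g.1 z = e.1 (f.1 z)) → Φ g = Φ e + Φ f

/-! ### The Polish space of subshifts over `ℤ` -/

/-- A point of the space `𝐒` of all (compact, nonempty, shift-invariant) subshifts
over finite alphabets contained in `ℤ`. -/
structure SubshiftSpace : Type where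
  carrier : Set (ℤ → ℤ)
  nonempty : carrier.Nonempty
  compact : IsCompact carrier
  invariant : shift '' carrier = carrier

/-- The topology on `𝐒` induced by the languages `(L_n(X))_{n}`, with each
family of `n`-languages discrete; this coincides with the metric
`d(X,Y) = 2^{-min{n : L_n(X) ≠ L_n(Y)}}`. -/
instance : TopologicalSpace SubshiftSpace :=
  TopologicalSpace.induced
    (fun X : SubshiftSpace => (fun n => Lang n X.carrier : ℕ → Set (List ℤ)))
    (@Pi.topologicalSpace ℕ (fun _ => Set (List ℤ)) (fun _ => ⊥))

/-- The subset `𝐌 ⊆ 𝐒` of infinite minimal subshifts. -/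
def MinimalSet : Set SubshiftSpace :=
  {X | X.carrier.Infinite ∧ ∀ x ∈ X.carrier, X.carrier ⊆ closure (orbit x)}


/-!
Cut every block `x[t + kp, t + (k+1)p)` of the cut `(p, t)` at position `t'` into `P k ++ S k`;
the blocks of the cut `(p, t')` are then `S k ++ P (k + 1)`. If `P` or `S` is constant, the new
blocks correspond bijectively to the old ones. Otherwise both halves separate the two old blocks,
so a new block determines the pair of consecutive old blocks it straddles. But a two-valued
sequence with at most two distinct consecutive pairs alternates, and then `x` is `2p`-periodic.
-/

open Function

section EncardLeTwo

variable {α β : Type*} {s : Set α}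

theorem _root_.Set.eq_or_eq_or_eq_of_encard_le_two (hs : s.encard ≤ 2) {a b c : α}
    (ha : a ∈ s) (hb : b ∈ s) (hc : c ∈ s) : a = b ∨ a = c ∨ b = c := by
  by_contra! h
  have h3 : ({a, b, c} : Set α).encard = 3 :=
    encard_eq_three.2 ⟨a, b, c, h.1, h.2.1, h.2.2, rfl⟩
  have := h3 ▸ encard_le_encard (insert_subset ha (insert_subset hb (singleton_subset_iff.2 hc)))
  exact absurd (this.trans hs) (by norm_num)

theorem _root_.Set.injOn_of_encard_le_two (hs : s.encard ≤ 2) {g : α → β} {a a' : α}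
    (ha : a ∈ s) (ha' : a' ∈ s) (hg : g a ≠ g a') : InjOn g s := by
  intro y hy z hz hyz
  have := eq_or_eq_or_eq_of_encard_le_two hs ha ha' hy
  have := eq_or_eq_or_eq_of_encard_le_two hs ha ha' hz
  grind

end EncardLeTwo

theorem _root_.Function.periodic_two_of_encard_range_le_two {α : Type*} {b : ℤ → α}
    (hb : (range b).encard ≤ 2) (hc : (range fun k => (b k, b (k + 1))).encard ≤ 2) :
    Periodic b 2 := by
  -- if `b k ≠ b (k + 2)`, three consecutive pairs around `k` are pairwise distinct
  intro k
  by_contra hne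
  have pair : ∀ j, (b j, b (j + 1)) ∈ range fun k => (b k, b (k + 1)) := mem_range_self
  rcases eq_or_eq_or_eq_of_encard_le_two hb (mem_range_self k) (mem_range_self (k + 1))
    (mem_range_self (k + 2)) with h | h | h
  · have := eq_or_eq_or_eq_of_encard_le_two hc (pair k) (pair (k + 1)) (pair (k + 2))
    grind
  · exact hne h.symm
  · have := eq_or_eq_or_eq_of_encard_le_two hc (pair (k - 1)) (pair k) (pair (k + 1))
    grind

section Recut

variable {β γ : Type*} {P : ℤ → β} {S : ℤ → γ}

theorem encard_range_recut_of_forall_eq_left (hP : ∀ k, P k = P 0) :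
    (range fun k => (S k, P (k + 1))).encard = (range fun k => (P k, S k)).encard := by
  have hrange : (range fun k => (S k, P (k + 1))) =
      (fun q => (q.2, P 0)) '' range fun k => (P k, S k) := by
    rw [← range_comp]; simp only [comp_def, hP]
  rw [hrange]
  refine InjOn.encard_image ?_
  rintro _ ⟨k, rfl⟩ _ ⟨k', rfl⟩ h
  simp_all

theorem encard_range_recut_of_forall_eq_right (hS : ∀ k, S k = S 0) :
    (range fun k => (S k, P (k + 1))).encard = (range fun k => (P k, S k)).encard := by
  have hrange : (range fun k => (S k, P (k + 1))) =
      (fun q => (S 0, q.1)) '' range fun k => (P k, S k) := by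
    rw [← range_comp,
      ← (add_right_surjective 1).range_comp ((fun q => (S 0, q.1)) ∘ fun k => (P k, S k))]
    simp only [comp_def, hS]
  rw [hrange]
  refine InjOn.encard_image ?_
  rintro _ ⟨k, rfl⟩ _ ⟨k', rfl⟩ h
  simp_all

theorem forall_eq_or_forall_eq_of_encard_range_recut_le_two
    (hb : (range fun k => (P k, S k)).encard ≤ 2)
    (hrecut : (range fun k => (S k, P (k + 1))).encard ≤ 2)
    (hper : ¬ Periodic (fun k => (P k, S k)) 2) :
    (∀ k, P k = P 0) ∨ (∀ k, S k = S 0) := by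
  by_contra! ⟨⟨k, hk⟩, ⟨k', hk'⟩⟩
  have hfst := injOn_of_encard_le_two hb (g := Prod.fst) (mem_range_self k) (mem_range_self 0) hk
  have hsnd := injOn_of_encard_le_two hb (g := Prod.snd) (mem_range_self k') (mem_range_self 0) hk'
  have hrange : (range fun k => (S k, P (k + 1))) =
      (fun q => (q.1.2, q.2.1)) '' range fun k => ((P k, S k), (P (k + 1), S (k + 1))) := by
    rw [← range_comp]; rfl
  have hinj : InjOn (fun q => (q.1.2, q.2.1))
      (range fun k => ((P k, S k), (P (k + 1), S (k + 1)))) := by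
    rintro _ ⟨j, rfl⟩ _ ⟨j', rfl⟩ h
    simp only [Prod.mk.injEq] at h
    dsimp only
    rw [hsnd (mem_range_self j) (mem_range_self j') h.1,
      hfst (mem_range_self (j + 1)) (mem_range_self (j' + 1)) h.2]
  rw [hrange, hinj.encard_image] at hrecut
  exact hper (periodic_two_of_encard_range_le_two hb hrecut)

theorem encard_range_recut_eq_two_iff (hb : (range fun k => (P k, S k)).encard = 2)
    (hper : ¬ Periodic (fun k => (P k, S k)) 2) :
    (range fun k => (S k, P (k + 1))).encard = 2 ↔ (∀ k, P k = P 0) ∨ (∀ k, S k = S 0) := by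
  refine ⟨fun h => forall_eq_or_forall_eq_of_encard_range_recut_le_two hb.le h.le hper, ?_⟩
  rintro (hP | hS)
  · rwa [encard_range_recut_of_forall_eq_left hP]
  · rwa [encard_range_recut_of_forall_eq_right hS]

end Recut

theorem encard_range_append {ι α : Type*} {F G : ι → List α} {n : ℕ}
    (hF : ∀ k, (F k).length = n) :
    (range fun k => F k ++ G k).encard = (range fun k => (F k, G k)).encard := by
  rw [show (range fun k => F k ++ G k) = (fun q => q.1 ++ q.2) '' range fun k => (F k, G k) by
    rw [← range_comp]; rfl]
  refine InjOn.encard_image ?_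
  rintro _ ⟨k, rfl⟩ _ ⟨k', rfl⟩ h
  obtain ⟨hFk, hGk⟩ := List.append_inj h (by rw [hF, hF])
  exact Prod.ext hFk hGk

-- `factorAt` maps over `List.range n` coerced to `List ℤ`, i.e. over a `bind`
theorem factorAt_eq_map (x : ℤ → A) (i : ℤ) (n : ℕ) :
    factorAt x i n = (List.range n).map fun j : ℕ => x (i + j) := by
  simp only [factorAt, List.bind_eq_flatMap, List.pure_def, ← List.map_eq_flatMap, List.map_map]
  rfl

theorem length_factorAt (x : ℤ → A) (i : ℤ) (n : ℕ) : (factorAt x i n).length = n := by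
  simp [factorAt_eq_map]

theorem factorAt_add (x : ℤ → A) (i : ℤ) (m n : ℕ) :
    factorAt x i (m + n) = factorAt x i m ++ factorAt x (i + m) n := by
  simp [factorAt_eq_map, List.range_add, add_assoc]

theorem factorAt_eq_factorAt_iff {x : ℤ → A} {i i' : ℤ} {n : ℕ} :
    factorAt x i n = factorAt x i' n ↔ ∀ j < n, x (i + j) = x (i' + j) := by
  simp [factorAt_eq_map, List.ext_getElem_iff]

theorem Ico_subset_perSet_iff {x : ℤ → A} {p : ℕ} {i : ℤ} {n : ℕ} :
    Ico i (i + n) ⊆ PerSet x p ↔ ∀ k : ℤ, factorAt x (i + k * p) n = factorAt x i n := by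
  simp only [factorAt_eq_factorAt_iff, subset_def, mem_Ico, PerSet, mem_ofPred_eq]
  constructor
  · intro h k j hj
    rw [add_right_comm]
    exact h (i + j) ⟨by omega, by omega⟩ k
  · rintro h m ⟨him, hmn⟩ k
    obtain ⟨j, rfl⟩ : ∃ j : ℕ, m = i + j := ⟨(m - i).toNat, by omega⟩
    rw [add_right_comm]
    exact h k j (by omega)

def blocks (x : ℤ → A) (i : ℤ) (n : ℕ) (k : ℤ) : List A :=
  factorAt x (i + k * n) n

theorem isPeriodicPoint_of_periodic_blocks {x : ℤ → A} {i : ℤ} {n m : ℕ} (hn : 0 < n)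
    (hm : 0 < m) (h : Periodic (blocks x i n) m) : IsPeriodicPoint x := by
  refine ⟨m * n, Nat.mul_pos hm hn, fun j => ?_⟩
  have hn' : (0 : ℤ) < n := by exact_mod_cast hn
  obtain ⟨k, r, hr, rfl⟩ : ∃ (k : ℤ) (r : ℕ), r < n ∧ j = i + k * n + r := by
    have := Int.emod_lt_of_pos (j - i) hn'
    have := Int.emod_nonneg (j - i) hn'.ne'
    have := Int.emod_add_mul_ediv (j - i) n
    refine ⟨(j - i) / n, ((j - i) % n).toNat, by omega, ?_⟩
    rw [Int.toNat_of_nonneg ‹_›]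
    linarith
  have := factorAt_eq_factorAt_iff.1 (h k) r hr
  rw [← this]
  congr 1
  push_cast
  ring

theorem cutWords_eq_range_blocks (x : ℤ → A) (p t : ℕ) :
    cutWords x p t = range (blocks x t p) := by
  ext w
  simp [cutWords, blocks, eq_comm]

theorem strongRank2Cut_iff {x : ℤ → A} {p t : ℕ} :
    StrongRank2Cut x p t ↔ t < p ∧ (range (blocks x t p)).encard = 2 := by
  rw [StrongRank2Cut, encard_eq_two, cutWords_eq_range_blocks]

theorem blocks_add_eq_append (x : ℤ → A) (i : ℤ) (d e : ℕ) (k : ℤ) :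
    blocks x i (d + e) k =
      factorAt x (i + k * (d + e : ℕ)) d ++ factorAt x (i + d + k * (d + e : ℕ)) e := by
  rw [blocks, factorAt_add, add_right_comm]

theorem blocks_add_add_eq_append (x : ℤ → A) (i : ℤ) (d e : ℕ) (k : ℤ) :
    blocks x (i + d) (d + e) k =
      factorAt x (i + d + k * (d + e : ℕ)) e ++ factorAt x (i + (k + 1) * (d + e : ℕ)) d := by
  rw [blocks, Nat.add_comm d e, factorAt_add]
  congr 2
  push_cast
  ring

theorem statement4_general {A : Type*} (x : ℤ → A) (hx : IsAperiodicPoint x)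
    (p t t' : ℕ) (h1 : t < t') (h2 : t' < p) (hcut : StrongRank2Cut x p t) :
    StrongRank2Cut x p t' ↔
      (Set.Ico (t : ℤ) (t' : ℤ) ⊆ PerSet x p ∨
       Set.Ico (t' : ℤ) ((t : ℤ) + p) ⊆ PerSet x p) := by
  obtain ⟨d, rfl⟩ : ∃ d, t' = t + d := ⟨t' - t, by omega⟩
  obtain ⟨e, rfl⟩ : ∃ e, p = d + e := ⟨p - d, by omega⟩
  set P : ℤ → List A := fun k => factorAt x (t + k * (d + e : ℕ)) d
  set S : ℤ → List A := fun k => factorAt x (t + d + k * (d + e : ℕ)) e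
  have hblocks : blocks x t (d + e) = fun k => P k ++ S k := funext (blocks_add_eq_append x t d e)
  have hblocks' : blocks x (t + d : ℕ) (d + e) = fun k => S k ++ P (k + 1) := by
    push_cast; exact funext (blocks_add_add_eq_append x t d e)
  have hcut' : (range fun k => (P k, S k)).encard = 2 := by
    rw [← encard_range_append (fun k => length_factorAt x _ d), ← hblocks]
    exact (strongRank2Cut_iff.1 hcut).2
  have hper : ¬ Periodic (fun k => (P k, S k)) 2 := fun h =>
    hx (isPeriodicPoint_of_periodic_blocks (n := d + e) (m := 2) (by omega) two_pos
      (by rw [hblocks]; exact h.comp fun q => q.1 ++ q.2))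
  rw [strongRank2Cut_iff, hblocks', encard_range_append (fun k => length_factorAt x _ e),
    encard_range_recut_eq_two_iff hcut' hper, and_iff_right h2, Nat.cast_add, Nat.cast_add,
    ← add_assoc, Ico_subset_perSet_iff, Ico_subset_perSet_iff]
  simp [P, S]

/-- Let `x` be aperiodic and `0 ≤ t < t' < p` with `(p, t)` a strong
rank-2 cut of `x`. Then `(p, t')` is a strong rank-2 cut of `x` iff
`[t, t') ⊆ Per_p(x)` or `[t', t+p) ⊆ Per_p(x)`. -/
theorem statement4 {A : Type*} [Fintype A] (x : ℤ → A) (hx : IsAperiodicPoint x)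
    (p t t' : ℕ) (h1 : t < t') (h2 : t' < p) (hcut : StrongRank2Cut x p t) :
    StrongRank2Cut x p t' ↔
      (Set.Ico (t : ℤ) (t' : ℤ) ⊆ PerSet x p ∨
       Set.Ico (t' : ℤ) ((t : ℤ) + p) ⊆ PerSet x p) :=
  statement4_general x hx p t t' h1 h2 hcut

end ToeplitzFR
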